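/- Let C₀ be symmetric positive definite, C₀AᵀΓ⁻¹A = S D S⁻¹ with D = diag(μ₁,…,μ_k,0,…,0), E_∞ = diag(0,…,0,1,…,1), C_∞ = S E_∞ S⁻¹ C₀, and define x† := x₀ + (E − C_∞C₀⁻¹)(u† − x₀). Then A x† = A u†, and among all x ∈ ℝⁿ with Ax = Au†, x† uniquely minimizes the weighted norm ‖x − x₀‖_{C₀} := ⟨x−x₀, C₀⁻¹(x−x₀)⟩^{1/2}. -/

import Mathlib

/-!
Write `M = C₀AᵀΓ⁻¹A = S diag(μ) S⁻¹`. Then `R := E − C_∞C₀⁻¹ = S diag(μ μ⁻¹) S⁻¹` is the spectral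
projector of `M` onto its range, and `R = MQ` with the pseudo-inverse `Q = S diag(μ⁻¹) S⁻¹`.
Positive definiteness of `Γ⁻¹` gives `AR = A`, so `x†` is feasible, and `C₀⁻¹R = AᵀΓ⁻¹AQ` has
range in `range Aᵀ = (ker A)^⊥`, so `x† − x₀ = R(u† − x₀)` is `C₀⁻¹`-orthogonal to `ker A`.
Pythagoras then gives `‖x − x₀‖² = ‖x† − x₀‖² + ‖x − x†‖²` in the `C₀⁻¹`-norm for every
feasible `x`.
-/

open Matrix

variable {ι κ : Type*} [Fintype ι]

section WeightedLeastNorm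

variable {G : Matrix ι ι ℝ} {A : Matrix κ ι ℝ} {x₀ y x : ι → ℝ}

theorem dotProduct_mulVec_add_of_orthogonal (hG : Gᵀ = G) {v w : ι → ℝ}
    (hvw : w ⬝ᵥ (G *ᵥ v) = 0) :
    (v + w) ⬝ᵥ (G *ᵥ (v + w)) = v ⬝ᵥ (G *ᵥ v) + w ⬝ᵥ (G *ᵥ w) := by
  have hwv : v ⬝ᵥ (G *ᵥ w) = 0 := by
    rw [dotProduct_mulVec, ← mulVec_transpose, hG, dotProduct_comm, hvw]
  simp only [mulVec_add, dotProduct_add, add_dotProduct, hvw, hwv, add_zero, zero_add]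

theorem dotProduct_mulVec_sub_eq_add (hG : Gᵀ = G)
    (hy : ∀ ξ, A *ᵥ ξ = 0 → ξ ⬝ᵥ (G *ᵥ (y - x₀)) = 0) (hx : A *ᵥ x = A *ᵥ y) :
    (x - x₀) ⬝ᵥ (G *ᵥ (x - x₀)) = (y - x₀) ⬝ᵥ (G *ᵥ (y - x₀)) + (x - y) ⬝ᵥ (G *ᵥ (x - y)) := by
  have hker : A *ᵥ (x - y) = 0 := by rw [mulVec_sub, hx, sub_self]
  rw [← dotProduct_mulVec_add_of_orthogonal hG (hy _ hker), sub_add_sub_cancel']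

theorem dotProduct_mulVec_sub_le (hG : G.PosSemidef)
    (hy : ∀ ξ, A *ᵥ ξ = 0 → ξ ⬝ᵥ (G *ᵥ (y - x₀)) = 0) (hx : A *ᵥ x = A *ᵥ y) :
    (y - x₀) ⬝ᵥ (G *ᵥ (y - x₀)) ≤ (x - x₀) ⬝ᵥ (G *ᵥ (x - x₀)) := by
  rw [dotProduct_mulVec_sub_eq_add (G := G) hG.isHermitian.eq hy hx, le_add_iff_nonneg_right]
  simpa using hG.dotProduct_mulVec_nonneg (x - y)

theorem dotProduct_mulVec_sub_lt (hG : G.PosDef)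
    (hy : ∀ ξ, A *ᵥ ξ = 0 → ξ ⬝ᵥ (G *ᵥ (y - x₀)) = 0) (hx : A *ᵥ x = A *ᵥ y) (hne : x ≠ y) :
    (y - x₀) ⬝ᵥ (G *ᵥ (y - x₀)) < (x - x₀) ⬝ᵥ (G *ᵥ (x - x₀)) := by
  rw [dotProduct_mulVec_sub_eq_add (G := G) hG.isHermitian.eq hy hx, lt_add_iff_pos_right]
  simpa using hG.dotProduct_mulVec_pos (sub_ne_zero.mpr hne)

end WeightedLeastNorm

variable [Fintype κ]

theorem mulVec_eq_zero_of_transpose_mul_mul_mulVec_eq_zero {A : Matrix κ ι ℝ}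
    {Γ : Matrix κ κ ℝ} (hΓ : Γ.PosDef) {v : ι → ℝ} (h : (Aᵀ * Γ * A) *ᵥ v = 0) :
    A *ᵥ v = 0 := by
  by_contra hAv
  have hquad : (A *ᵥ v) ⬝ᵥ (Γ *ᵥ (A *ᵥ v)) = v ⬝ᵥ ((Aᵀ * Γ * A) *ᵥ v) := by
    rw [← mulVec_mulVec, ← mulVec_mulVec, dotProduct_mulVec v Aᵀ, vecMul_transpose]
  have hpos := hΓ.dotProduct_mulVec_pos hAv
  rw [star_trivial, hquad, h, dotProduct_zero] at hpos
  exact hpos.false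

variable [DecidableEq ι] [DecidableEq κ]

theorem conj_diagonal_mul_conj_diagonal {K : Type*} [Field K] {S : Matrix ι ι K}
    (hS : IsUnit S.det) (a b : ι → K) :
    S * diagonal a * S⁻¹ * (S * diagonal b * S⁻¹) = S * diagonal (a * b) * S⁻¹ := by
  rw [show diagonal (a * b) = diagonal a * diagonal b from (diagonal_mul_diagonal a b).symm]
  simp only [Matrix.mul_assoc, nonsing_inv_mul_cancel_left _ _ hS]

section Spectral

variable {C₀ S : Matrix ι ι ℝ} {A : Matrix κ ι ℝ} {Γ : Matrix κ κ ℝ} {μ : ι → ℝ}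

theorem transpose_mul_inv_mul_eq_inv_mul (hC₀ : IsUnit C₀.det)
    (hdiag : C₀ * Aᵀ * Γ⁻¹ * A = S * diagonal μ * S⁻¹) :
    Aᵀ * Γ⁻¹ * A = C₀⁻¹ * (S * diagonal μ * S⁻¹) := by
  rw [← hdiag]
  simp only [Matrix.mul_assoc, nonsing_inv_mul_cancel_left _ _ hC₀]

/- The pointwise inverse `μ⁻¹` vanishes where `μ` does (`0⁻¹ = 0`), so `μ * μ⁻¹` is the indicator
of the support of `μ`. -/
theorem mul_conj_diagonal_mul_inv_self (hC₀ : IsUnit C₀.det) (hΓ : Γ.PosDef)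
    (hS : IsUnit S.det) (hdiag : C₀ * Aᵀ * Γ⁻¹ * A = S * diagonal μ * S⁻¹) :
    A * (S * diagonal (μ * μ⁻¹) * S⁻¹) = A := by
  have hμ : μ * (μ * μ⁻¹) = μ := funext fun i => by
    simp only [Pi.mul_apply, Pi.inv_apply, ← mul_assoc, mul_self_mul_inv]
  have hM : Aᵀ * Γ⁻¹ * A * (1 - S * diagonal (μ * μ⁻¹) * S⁻¹) = 0 := by
    rw [transpose_mul_inv_mul_eq_inv_mul hC₀ hdiag, Matrix.mul_assoc, mul_sub, mul_one,
      conj_diagonal_mul_conj_diagonal hS, hμ, sub_self, Matrix.mul_zero]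
  refine ext_iff_mulVec.mpr fun v => ?_
  have hker := mulVec_eq_zero_of_transpose_mul_mul_mulVec_eq_zero hΓ.inv
    (v := (1 - S * diagonal (μ * μ⁻¹) * S⁻¹) *ᵥ v) (by rw [mulVec_mulVec, hM, zero_mulVec])
  rw [sub_mulVec, one_mulVec, mulVec_sub, sub_eq_zero] at hker
  rw [← mulVec_mulVec, ← hker]

theorem dotProduct_inv_mulVec_conj_diagonal_eq_zero (hC₀ : IsUnit C₀.det) (hS : IsUnit S.det)
    (hdiag : C₀ * Aᵀ * Γ⁻¹ * A = S * diagonal μ * S⁻¹) {ξ : ι → ℝ} (hξ : A *ᵥ ξ = 0)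
    (v : ι → ℝ) : ξ ⬝ᵥ (C₀⁻¹ *ᵥ ((S * diagonal (μ * μ⁻¹) * S⁻¹) *ᵥ v)) = 0 := by
  have hfactor : C₀⁻¹ * (S * diagonal (μ * μ⁻¹) * S⁻¹) =
      Aᵀ * (Γ⁻¹ * A * (S * diagonal μ⁻¹ * S⁻¹)) := by
    rw [← conj_diagonal_mul_conj_diagonal hS, ← Matrix.mul_assoc,
      ← transpose_mul_inv_mul_eq_inv_mul hC₀ hdiag]
    simp only [Matrix.mul_assoc]
  rw [mulVec_mulVec, hfactor, ← mulVec_mulVec, dotProduct_mulVec, vecMul_transpose, hξ,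
    zero_dotProduct]

end Spectral

theorem minimal_norm_limit_general {n m k : ℕ}
    (C₀ : Matrix (Fin n) (Fin n) ℝ) (hC₀ : C₀.PosDef)
    (A : Matrix (Fin m) (Fin n) ℝ)
    (Γ : Matrix (Fin m) (Fin m) ℝ) (hΓ : Γ.PosDef)
    (S : Matrix (Fin n) (Fin n) ℝ) (μ : Fin n → ℝ)
    (hS : IsUnit S.det)
    (hμpos : ∀ i : Fin n, (i : ℕ) < k → 0 < μ i)
    (hμzero : ∀ i : Fin n, k ≤ (i : ℕ) → μ i = 0)
    (hdiag : C₀ * Aᵀ * Γ⁻¹ * A = S * Matrix.diagonal μ * S⁻¹)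
    (Einf : Matrix (Fin n) (Fin n) ℝ)
    (hEinf : Einf = Matrix.diagonal (fun i : Fin n => if (i : ℕ) < k then (0 : ℝ) else 1))
    (Cinf : Matrix (Fin n) (Fin n) ℝ) (hCinf : Cinf = S * Einf * S⁻¹ * C₀)
    (x₀ udag : Fin n → ℝ) (xdag : Fin n → ℝ)
    (hxdag : xdag = x₀ + (1 - Cinf * C₀⁻¹) *ᵥ (udag - x₀)) :
    A *ᵥ xdag = A *ᵥ udag ∧
    ∀ x : Fin n → ℝ, A *ᵥ x = A *ᵥ udag →
      Real.sqrt ((xdag - x₀) ⬝ᵥ (C₀⁻¹ *ᵥ (xdag - x₀))) ≤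
        Real.sqrt ((x - x₀) ⬝ᵥ (C₀⁻¹ *ᵥ (x - x₀))) ∧
      (x ≠ xdag →
        Real.sqrt ((xdag - x₀) ⬝ᵥ (C₀⁻¹ *ᵥ (xdag - x₀))) <
          Real.sqrt ((x - x₀) ⬝ᵥ (C₀⁻¹ *ᵥ (x - x₀)))) := by
  have hC₀det : IsUnit C₀.det := hC₀.det_pos.ne'.isUnit
  have hE : 1 - Einf = diagonal (μ * μ⁻¹) := by
    rw [hEinf, ← diagonal_one, diagonal_sub]
    congr 1
    funext i
    by_cases hi : (i : ℕ) < k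
    · simp [hi, (hμpos i hi).ne']
    · simp [hi, hμzero i (not_lt.mp hi)]
  have hR : 1 - Cinf * C₀⁻¹ = S * diagonal (μ * μ⁻¹) * S⁻¹ := by
    rw [hCinf, mul_nonsing_inv_cancel_right _ _ hC₀det, ← hE, mul_sub, sub_mul, mul_one,
      mul_nonsing_inv _ hS]
  have hshift : xdag - x₀ = (S * diagonal (μ * μ⁻¹) * S⁻¹) *ᵥ (udag - x₀) := by
    rw [hxdag, hR, add_sub_cancel_left]
  have hfeas : A *ᵥ xdag = A *ᵥ udag := by
    rw [← sub_eq_zero, ← mulVec_sub, ← sub_sub_sub_cancel_right xdag udag x₀, hshift,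
      mulVec_sub, mulVec_mulVec, mul_conj_diagonal_mul_inv_self hC₀det hΓ hS hdiag, sub_self]
  have horth : ∀ ξ, A *ᵥ ξ = 0 → ξ ⬝ᵥ (C₀⁻¹ *ᵥ (xdag - x₀)) = 0 := fun ξ hξ => by
    rw [hshift]
    exact dotProduct_inv_mulVec_conj_diagonal_eq_zero hC₀det hS hdiag hξ _
  refine ⟨hfeas, fun x hx => ⟨?_, fun hne => ?_⟩⟩
  · exact Real.sqrt_le_sqrt
      (dotProduct_mulVec_sub_le hC₀.inv.posSemidef horth (hx.trans hfeas.symm))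
  · refine Real.sqrt_lt_sqrt ?_ (dotProduct_mulVec_sub_lt hC₀.inv horth (hx.trans hfeas.symm) hne)
    simpa using hC₀.inv.posSemidef.dotProduct_mulVec_nonneg (xdag - x₀)

theorem minimal_norm_limit {n m k : ℕ} (hk : k ≤ n)
    (C₀ : Matrix (Fin n) (Fin n) ℝ) (hC₀ : C₀.PosDef)
    (A : Matrix (Fin m) (Fin n) ℝ)
    (Γ : Matrix (Fin m) (Fin m) ℝ) (hΓ : Γ.PosDef)
    (S : Matrix (Fin n) (Fin n) ℝ) (μ : Fin n → ℝ)
    (hS : IsUnit S.det)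
    (hμpos : ∀ i : Fin n, (i : ℕ) < k → 0 < μ i)
    (hμzero : ∀ i : Fin n, k ≤ (i : ℕ) → μ i = 0)
    (hdiag : C₀ * Aᵀ * Γ⁻¹ * A = S * Matrix.diagonal μ * S⁻¹)
    (Einf : Matrix (Fin n) (Fin n) ℝ)
    (hEinf : Einf = Matrix.diagonal (fun i : Fin n => if (i : ℕ) < k then (0 : ℝ) else 1))
    (Cinf : Matrix (Fin n) (Fin n) ℝ) (hCinf : Cinf = S * Einf * S⁻¹ * C₀)
    (x₀ udag : Fin n → ℝ) (xdag : Fin n → ℝ)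
    (hxdag : xdag = x₀ + (1 - Cinf * C₀⁻¹) *ᵥ (udag - x₀)) :
    A *ᵥ xdag = A *ᵥ udag ∧
    ∀ x : Fin n → ℝ, A *ᵥ x = A *ᵥ udag →
      Real.sqrt ((xdag - x₀) ⬝ᵥ (C₀⁻¹ *ᵥ (xdag - x₀))) ≤
        Real.sqrt ((x - x₀) ⬝ᵥ (C₀⁻¹ *ᵥ (x - x₀))) ∧
      (x ≠ xdag →
        Real.sqrt ((xdag - x₀) ⬝ᵥ (C₀⁻¹ *ᵥ (xdag - x₀))) <
          Real.sqrt ((x - x₀) ⬝ᵥ (C₀⁻¹ *ᵥ (x - x₀)))) :=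
  minimal_norm_limit_general C₀ hC₀ A Γ hΓ S μ hS hμpos hμzero hdiag Einf hEinf Cinf hCinf x₀ udag
    xdag hxdag
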